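/- For an edge (i,j) and distinct types t ≠ t', the number of typed 4-path center-orbit instances with type vector (φ_i, φ_j, t, t') equals |S_i^t|·|S_j^{t'}| + |S_i^{t'}|·|S_j^t| minus the corresponding number of typed 4-cycles with the same type vector. -/

import Mathlib

open Finset

theorem card_filter_not_product_add_card_filter_not_product {α β : Type*}
    (s₁ s₂ : Finset α) (t₁ t₂ : Finset β) (r : α → β → Prop) [DecidableRel r] :
    #{p ∈ s₁ ×ˢ t₁ | ¬ r p.1 p.2} + #{p ∈ s₂ ×ˢ t₂ | ¬ r p.1 p.2}
      = #s₁ * #t₁ + #s₂ * #t₂ - (#{p ∈ s₁ ×ˢ t₁ | r p.1 p.2} + #{p ∈ s₂ ×ˢ t₂ | r p.1 p.2}) := by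
  have h₁ := card_filter_add_card_filter_not (s := s₁ ×ˢ t₁) (fun p => r p.1 p.2)
  have h₂ := card_filter_add_card_filter_not (s := s₂ ×ˢ t₂) (fun p => r p.1 p.2)
  rw [card_product] at h₁ h₂
  omega

theorem typed_four_path_center_distinct_types_general {V T : Type*} [Fintype V] [DecidableEq V]
    [DecidableEq T]
    (G : SimpleGraph V) [DecidableRel G.Adj] (φ : V → T) (i j : V) (t t' : T) :
    let Γi := G.neighborFinset i
    let Γj := G.neighborFinset j
    let Tij := Γi ∩ Γj
    let Sit := (Γi \ (Tij ∪ {j})).filter (fun k => φ k = t)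
    let Sit' := (Γi \ (Tij ∪ {j})).filter (fun k => φ k = t')
    let Sjt := (Γj \ (Tij ∪ {i})).filter (fun k => φ k = t)
    let Sjt' := (Γj \ (Tij ∪ {i})).filter (fun k => φ k = t')
    ((Sjt ×ˢ Sit').filter (fun p => ¬ G.Adj p.1 p.2)).card
      + ((Sjt' ×ˢ Sit).filter (fun p => ¬ G.Adj p.1 p.2)).card
      = Sit.card * Sjt'.card + Sit'.card * Sjt.card
        - (((Sjt ×ˢ Sit').filter (fun p => G.Adj p.1 p.2)).card
           + ((Sjt' ×ˢ Sit).filter (fun p => G.Adj p.1 p.2)).card) := by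
  intro Γi Γj Tij Sit Sit' Sjt Sjt'
  rw [add_comm (Sit.card * _), mul_comm Sit'.card, mul_comm Sit.card]
  exact card_filter_not_product_add_card_filter_not_product Sjt Sjt' Sit' Sit G.Adj

/-- Typed 4-path center orbit count for distinct types `t ≠ t'`:
`f(g₄) = |S_i^t|·|S_j^{t'}| + |S_i^{t'}|·|S_j^t| − f(g₆)` (4-cycles of the same type vector). -/
theorem typed_four_path_center_distinct_types {V T : Type*} [Fintype V] [DecidableEq V]
    [DecidableEq T]
    (G : SimpleGraph V) [DecidableRel G.Adj] (φ : V → T) (i j : V) (t t' : T)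
    (hij : G.Adj i j) (htt : t ≠ t') :
    let Γi := G.neighborFinset i
    let Γj := G.neighborFinset j
    let Tij := Γi ∩ Γj
    let Sit := (Γi \ (Tij ∪ {j})).filter (fun k => φ k = t)
    let Sit' := (Γi \ (Tij ∪ {j})).filter (fun k => φ k = t')
    let Sjt := (Γj \ (Tij ∪ {i})).filter (fun k => φ k = t)
    let Sjt' := (Γj \ (Tij ∪ {i})).filter (fun k => φ k = t')
    ((Sjt ×ˢ Sit').filter (fun p => ¬ G.Adj p.1 p.2)).card
      + ((Sjt' ×ˢ Sit).filter (fun p => ¬ G.Adj p.1 p.2)).card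
      = Sit.card * Sjt'.card + Sit'.card * Sjt.card
        - (((Sjt ×ˢ Sit').filter (fun p => G.Adj p.1 p.2)).card
           + ((Sjt' ×ˢ Sit).filter (fun p => G.Adj p.1 p.2)).card) :=
  typed_four_path_center_distinct_types_general G φ i j t t'
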